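/- Let n ≥ 2, let t > 0, and let u_1,…,u_n, v_1,…,v_n be vectors in ℝ^d with ‖u_i‖ = ‖v_i‖ = 1 for all i. Then the symmetric InfoNCE loss satisfies (1/(2n)) ∑_{i=1}^n log(1 + ∑_{j≠i} exp((⟨u_i, v_j⟩ − ⟨u_i, v_i⟩)/t)) + (1/(2n)) ∑_{i=1}^n log(1 + ∑_{j≠i} exp((⟨u_j, v_i⟩ − ⟨u_i, v_i⟩)/t)) ≥ log(1 + (n−1)·exp(−n/((n−1)·t))). -/

import Mathlib

open scoped RealInnerProductSpace
open Finset

/-!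
Write `g(s) = log (1 + (n - 1) e^s)`, a convex increasing function. By AM–GM, each row term
`log (1 + ∑_{j ≠ i} e^{a_j})` is at least `g` of the mean of the `n - 1` exponents, and by Jensen
the average of these over `i` is at least `g` of the mean of all `n (n - 1)` exponents. For both
halves of the loss that grand total is `(⟪∑ u, ∑ v⟫ - n ∑ ⟪u i, v i⟫) / t`. For vectors in the
unit ball it is at least `-n² / t`: with `D = ∑ ‖u i - v i‖²` we have
`⟪∑ u, ∑ v⟫ ≥ -‖∑ u - ∑ v‖² / 2 ≥ -n D / 2` and `n ∑ ⟪u i, v i⟫ ≤ n² - n D / 2`.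
-/

theorem convexOn_log_one_add_mul_exp {c : ℝ} (hc : 0 ≤ c) :
    ConvexOn ℝ Set.univ (fun s => Real.log (1 + c * Real.exp s)) := by
  have hpos : ∀ s, 0 < 1 + c * Real.exp s := fun s => by positivity
  have hderiv : ∀ s, HasDerivAt (fun s => Real.log (1 + c * Real.exp s))
      (c * Real.exp s / (1 + c * Real.exp s)) s := fun s =>
    (((Real.hasDerivAt_exp s).const_mul c).const_add 1).log (hpos s).ne'
  refine Monotone.convexOn_univ_of_deriv (fun s => (hderiv s).differentiableAt) ?_
  rw [funext fun s => (hderiv s).deriv]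
  intro a b hab
  rw [div_le_div_iff₀ (hpos a) (hpos b)]
  nlinarith [mul_le_mul_of_nonneg_left (Real.exp_le_exp.2 hab) hc]

theorem monotone_log_one_add_mul_exp {c : ℝ} (hc : 0 ≤ c) :
    Monotone (fun s => Real.log (1 + c * Real.exp s)) := fun _ _ h =>
  Real.log_le_log (by positivity) (by gcongr)

theorem ConvexOn.map_sum_div_card_le {ι : Type*} {D : Set ℝ} {f : ℝ → ℝ} (hf : ConvexOn ℝ D f)
    {s : Finset ι} (hs : s.Nonempty) {x : ι → ℝ} (hx : ∀ i ∈ s, x i ∈ D) :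
    f ((∑ i ∈ s, x i) / #s) ≤ (∑ i ∈ s, f (x i)) / #s := by
  have hcard : (#s : ℝ) ≠ 0 := by exact_mod_cast hs.card_pos.ne'
  have h := hf.map_sum_le (t := s) (w := fun _ => (#s : ℝ)⁻¹) (p := x)
    (fun _ _ => by positivity) (by simp [hcard]) hx
  simp only [smul_eq_mul] at h
  rwa [← mul_sum, ← mul_sum, inv_mul_eq_div, inv_mul_eq_div] at h

theorem log_one_add_card_mul_exp_mean_le {ι : Type*} {s : Finset ι} (hs : s.Nonempty)
    (x : ι → ℝ) :
    Real.log (1 + #s * Real.exp ((∑ j ∈ s, x j) / #s))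
      ≤ Real.log (1 + ∑ j ∈ s, Real.exp (x j)) := by
  have hcard : (0 : ℝ) < #s := by exact_mod_cast hs.card_pos
  have h := convexOn_exp.map_sum_div_card_le hs (fun i _ => Set.mem_univ (x i))
  rw [le_div_iff₀ hcard] at h
  exact Real.log_le_log (by positivity) (by linarith)

theorem sum_sum_erase_sub_diag {ι : Type*} [Fintype ι] [DecidableEq ι] (A : ι → ι → ℝ) :
    ∑ i, ∑ j ∈ univ.erase i, (A i j - A i i)
      = ∑ i, ∑ j, A i j - Fintype.card ι * ∑ i, A i i := by
  simp only [fun i => sum_erase (f := fun j => A i j - A i i) univ (sub_self _), sum_sub_distrib,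
    sum_const, card_univ, nsmul_eq_mul, mul_sum]

theorem neg_card_sq_le_inner_sum_sub_card_mul_sum_inner {ι E : Type*} [Fintype ι]
    [NormedAddCommGroup E] [InnerProductSpace ℝ E] (u v : ι → E)
    (hu : ∀ i, ‖u i‖ ≤ 1) (hv : ∀ i, ‖v i‖ ≤ 1) :
    -(Fintype.card ι : ℝ) ^ 2
      ≤ ⟪∑ i, u i, ∑ i, v i⟫ - Fintype.card ι * ∑ i, ⟪u i, v i⟫ := by
  set n : ℝ := (Fintype.card ι : ℝ)
  set D := ∑ i, ‖u i - v i‖ ^ 2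
  have hdiag : ∑ i, ⟪u i, v i⟫ ≤ n - D / 2 := by
    have h : ∀ i, ⟪u i, v i⟫ ≤ 1 - ‖u i - v i‖ ^ 2 / 2 := fun i => by
      nlinarith [norm_sub_sq_real (u i) (v i), norm_nonneg (u i), norm_nonneg (v i), hu i, hv i]
    calc ∑ i, ⟪u i, v i⟫ ≤ ∑ i, (1 - ‖u i - v i‖ ^ 2 / 2) := sum_le_sum fun i _ => h i
      _ = n - D / 2 := by simp [sum_sub_distrib, D, sum_div, n]
  have hsum : ‖∑ i, u i - ∑ i, v i‖ ^ 2 ≤ n * D := by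
    rw [← sum_sub_distrib]
    calc ‖∑ i, (u i - v i)‖ ^ 2 ≤ (∑ i, ‖u i - v i‖) ^ 2 := by
          gcongr; exact norm_sum_le _ _
      _ ≤ n * D := by
          simpa using sq_sum_le_card_mul_sum_sq (s := univ) (f := fun i => ‖u i - v i‖)
  have hcross := norm_sub_sq_real (∑ i, u i) (∑ i, v i)
  have hn : 0 ≤ n := by positivity
  nlinarith [mul_le_mul_of_nonneg_left hdiag hn, sq_nonneg ‖∑ i, u i‖, sq_nonneg ‖∑ i, v i‖]

theorem card_mul_log_one_add_mul_exp_le_sum_log_one_add_sum_exp {ι : Type*} [Fintype ι]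
    [DecidableEq ι] (hι : 2 ≤ Fintype.card ι) (A : ι → ι → ℝ) :
    let n : ℝ := Fintype.card ι
    n * Real.log (1 + (n - 1) * Real.exp ((∑ i, ∑ j, A i j - n * ∑ i, A i i) / (n * (n - 1))))
      ≤ ∑ i, Real.log (1 + ∑ j ∈ univ.erase i, Real.exp (A i j - A i i)) := by
  intro n
  have hn : (2 : ℝ) ≤ n := by simp only [n]; exact_mod_cast hι
  have : Nonempty ι := Fintype.card_pos_iff.mp (by omega)
  have hcard : ∀ i : ι, (#(univ.erase i) : ℝ) = n - 1 := fun i => by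
    rw [card_erase_of_mem (mem_univ i), card_univ, Nat.cast_sub (by omega), Nat.cast_one]
  have hne : ∀ i : ι, (univ.erase i).Nonempty := fun i => by
    rw [← card_pos, ← Nat.cast_pos (α := ℝ), hcard]; linarith
  set g := fun s => Real.log (1 + (n - 1) * Real.exp s)
  set r := fun i => (∑ j ∈ univ.erase i, (A i j - A i i)) / (n - 1)
  have hrow : ∀ i, g (r i) ≤ Real.log (1 + ∑ j ∈ univ.erase i, Real.exp (A i j - A i i)) :=
    fun i => by
      simpa only [hcard] using log_one_add_card_mul_exp_mean_le (hne i) fun j => A i j - A i i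
  have hjensen : g ((∑ i, r i) / n) ≤ (∑ i, g (r i)) / n := by
    simpa only [card_univ] using (convexOn_log_one_add_mul_exp (by linarith : (0 : ℝ) ≤ n - 1)
      ).map_sum_div_card_le univ_nonempty fun i _ => Set.mem_univ (r i)
  have hmean : (∑ i, r i) / n = (∑ i, ∑ j, A i j - n * ∑ i, A i i) / (n * (n - 1)) := by
    rw [← sum_div, sum_sum_erase_sub_diag, div_div, mul_comm (n - 1)]
  rw [← hmean]
  calc n * g ((∑ i, r i) / n) ≤ ∑ i, g (r i) := by
        rwa [le_div_iff₀ (by linarith), mul_comm] at hjensen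
    _ ≤ _ := sum_le_sum fun i _ => hrow i

theorem stmt_11 {d n : ℕ} (hn : 2 ≤ n) (t : ℝ) (ht : 0 < t)
    (u v : Fin n → EuclideanSpace ℝ (Fin d))
    (hu : ∀ i, ‖u i‖ = 1) (hv : ∀ i, ‖v i‖ = 1) :
    Real.log (1 + ((n : ℝ) - 1) * Real.exp (-(n : ℝ) / (((n : ℝ) - 1) * t)))
      ≤ (1 / (2 * (n : ℝ))) *
          ∑ i, Real.log (1 + ∑ j ∈ univ.erase i,
            Real.exp ((⟪u i, v j⟫ - ⟪u i, v i⟫) / t))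
        + (1 / (2 * (n : ℝ))) *
          ∑ i, Real.log (1 + ∑ j ∈ univ.erase i,
            Real.exp ((⟪u j, v i⟫ - ⟪u i, v i⟫) / t)) := by
  have hn' : 2 ≤ Fintype.card (Fin n) := by simpa using hn
  have hrow := card_mul_log_one_add_mul_exp_le_sum_log_one_add_sum_exp hn'
    fun i j => ⟪u i, v j⟫ / t
  have hcol := card_mul_log_one_add_mul_exp_le_sum_log_one_add_sum_exp hn'
    fun i j => ⟪u j, v i⟫ / t
  rw [sum_comm] at hcol
  simp only [Fintype.card_fin, ← sub_div] at hrow hcol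
  have hS := neg_card_sq_le_inner_sum_sub_card_mul_sum_inner u v (fun i => (hu i).le)
    (fun i => (hv i).le)
  rw [Fintype.card_fin] at hS
  set S := ⟪∑ i, u i, ∑ i, v i⟫ - n * ∑ i, ⟪u i, v i⟫
  have hx : (∑ i, ∑ j, ⟪u i, v j⟫ / t - n * ∑ i, ⟪u i, v i⟫ / t) = S / t := by
    simp only [S, sum_inner]
    simp only [inner_sum, ← sum_div]
    ring
  rw [hx] at hrow hcol
  have hn2 : (2 : ℝ) ≤ n := by exact_mod_cast hn
  have hx₀ : -(n : ℝ) / ((n - 1) * t) ≤ S / t / (n * (n - 1)) := by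
    rw [show -(n : ℝ) / ((n - 1) * t) = -(n : ℝ) ^ 2 / t / (n * (n - 1)) by
      field_simp [show (n : ℝ) - 1 ≠ 0 by linarith]]
    gcongr
    exact mul_nonneg n.cast_nonneg (by linarith)
  set g := fun s => Real.log (1 + ((n : ℝ) - 1) * Real.exp s)
  calc g (-(n : ℝ) / ((n - 1) * t))
      ≤ g (S / t / (n * (n - 1))) := monotone_log_one_add_mul_exp (by linarith) hx₀
    _ = 1 / (2 * n) * (n * g (S / t / (n * (n - 1))))
          + 1 / (2 * n) * (n * g (S / t / (n * (n - 1)))) := by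
        field_simp; ring
    _ ≤ _ := by gcongr
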